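/- Let x : [0,2π] → ℝ be smooth with x(0)=0 and x̂(t) = (t, sin t, cos t − 1, x(t)). Then the Fourier cosine coefficient satisfies a_n = (1/π) Σ_{k=0}^n Σ_{q=0}^k C(n,k)C(k,q) cos((n−k)π/2) ⟨(e_4 ⧢ e_2^{⧢(n−k)} ⧢ e_3^{⧢q}) ≻ e_1, S(x̂)⟩, where a_n = (1/π)∫_0^{2π} x(t) cos(nt) dt. -/

import Mathlib

open MeasureTheory intervalIntegral Real Finset

/-- Shuffle product of two words, as the list of all interleavings (with multiplicity). -/
def shuffle {α : Type*} : List α → List α → List (List α)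
  | [], ys => [ys]
  | x :: xs, [] => [x :: xs]
  | x :: xs, y :: ys =>
      (shuffle xs (y :: ys)).map (x :: ·) ++ (shuffle (x :: xs) ys).map (y :: ·)
termination_by u v => u.length + v.length

/-- Iterated integral where the word is given in reverse order (last letter first). -/
noncomputable def sigRev {d : ℕ} (x : ℝ → Fin d → ℝ) (a : ℝ) : List (Fin d) → ℝ → ℝ
  | [] => fun _ => 1
  | i :: w => fun t => ∫ s in a..t, sigRev x a w s * deriv (fun u => x u i) s

/-- Signature coefficient `⟨e_w, S(x)_{a,b}⟩` of the path `x` over `[a,b]`. -/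
noncomputable def sigCoeff {d : ℕ} (x : ℝ → Fin d → ℝ) (a b : ℝ) (w : List (Fin d)) : ℝ :=
  sigRev x a w.reverse b

theorem test {d : ℕ} (x : ℝ → Fin d → ℝ) : sigCoeff x 0 1 [] = 1 := rfl

/-- Shuffle product of two formal sums of words (given as lists with multiplicity). -/
def shuffleList {α : Type*} (us vs : List (List α)) : List (List α) :=
  us.flatMap fun u => vs.flatMap fun v => shuffle u v

/-- `n`-fold shuffle power `w^{⧢ n}` of a word `w`. -/
def shufflePow {α : Type*} (w : List α) : ℕ → List (List α)
  | 0 => [[]]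
  | n + 1 => shuffleList [w] (shufflePow w n)

/-- The Fourier augmentation `x̂(t) = (t, sin t, cos t − 1, x(t)) ∈ ℝ⁴`. -/
noncomputable def fourierAug (x : ℝ → ℝ) : ℝ → Fin 4 → ℝ :=
  fun t => ![t, Real.sin t, Real.cos t - 1, x t]

set_option linter.unusedSectionVars false

theorem shuffle_nil_left {α : Type*} (v : List α) : shuffle [] v = [v] := by rw [shuffle]

theorem shuffle_nil_right {α : Type*} (u : List α) : shuffle u [] = [u] := by
  cases u <;> rw [shuffle]

theorem shuffle_cons_cons {α : Type*} (a b : α) (u v : List α) :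
    shuffle (a :: u) (b :: v) =
      (shuffle u (b :: v)).map (a :: ·) ++ (shuffle (a :: u) v).map (b :: ·) := by
  rw [shuffle]

section
variable {α : Type*} {M : Type*} [AddCommMonoid M]

/-- snoc recursion for shuffle, at the level of sums of an arbitrary weight. -/
theorem sum_shuffle_snoc (a b : α) :
    ∀ (u v : List α) (h : List α → M),
      ((shuffle (u ++ [a]) (v ++ [b])).map h).sum =
        ((shuffle u (v ++ [b])).map fun w => h (w ++ [a])).sum +
        ((shuffle (u ++ [a]) v).map fun w => h (w ++ [b])).sum := by
  intro u
  induction u with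
  | nil =>
    intro v
    induction v with
    | nil =>
      intro h
      simp only [List.nil_append, shuffle_cons_cons, shuffle_nil_left, shuffle_nil_right,
        List.map_append, List.map_map, List.sum_append, List.map_cons, List.map_nil,
        List.sum_cons, List.sum_nil, List.singleton_append, Function.comp_def]
      abel
    | cons c v' ihv =>
      intro h
      have h1 := ihv (fun w => h (c :: w))
      simp only [List.nil_append, List.cons_append, shuffle_cons_cons, shuffle_nil_left,
        List.map_append, List.map_map, List.sum_append, List.map_cons, List.map_nil,
        List.sum_cons, List.sum_nil, List.singleton_append, Function.comp_def] at h1 ⊢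
      rw [h1]
      abel
  | cons d u' ihu =>
    intro v
    induction v with
    | nil =>
      intro h
      have h1 := ihu [] (fun w => h (d :: w))
      simp only [List.nil_append, List.cons_append, shuffle_cons_cons, shuffle_nil_right,
        List.map_append, List.map_map, List.sum_append, List.map_cons, List.map_nil,
        List.sum_cons, List.sum_nil, List.singleton_append, Function.comp_def] at h1 ⊢
      rw [h1]
      abel
    | cons c v' ihv =>
      intro h
      have h1 := ihu (c :: v') (fun w => h (d :: w))
      have h2 := ihv (fun w => h (c :: w))
      simp only [List.nil_append, List.cons_append, shuffle_cons_cons,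
        List.map_append, List.map_map, List.sum_append, List.map_cons, List.map_nil,
        List.sum_cons, List.sum_nil, List.singleton_append, Function.comp_def] at h1 h2 ⊢
      rw [h1, h2]
      abel

/-- reversing words inside a shuffle, at the level of sums. -/
theorem sum_shuffle_reverse :
    ∀ (u v : List α) (h : List α → M),
      ((shuffle u v).map fun w => h w.reverse).sum =
        ((shuffle u.reverse v.reverse).map h).sum := by
  intro u
  induction u with
  | nil => intro v h; simp [shuffle_nil_left]
  | cons a u' ihu =>
    intro v
    induction v with
    | nil => intro h; simp [shuffle_nil_right]
    | cons b v' ihv =>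
      intro h
      have h1 := ihu (b :: v') (fun w => h (w ++ [a]))
      have h2 := ihv (fun w => h (w ++ [b]))
      have h3 := sum_shuffle_snoc a b u'.reverse v'.reverse h
      simp only [shuffle_cons_cons, List.map_append, List.map_map, List.sum_append,
        Function.comp_def, List.reverse_cons] at h1 h2 h3 ⊢
      rw [h1, h2, h3]

end

section
variable {d : ℕ} (x : ℝ → Fin d → ℝ) (a : ℝ) (hc : ∀ i, Continuous (deriv (fun u => x u i)))

theorem sigRev_nil : sigRev x a [] = fun _ => (1:ℝ) := by rw [sigRev]

theorem sigRev_cons (i : Fin d) (w : List (Fin d)) :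
    sigRev x a (i :: w) = fun t => ∫ s in a..t, sigRev x a w s * deriv (fun u => x u i) s := by
  rw [sigRev]

include hc in
theorem sigRev_continuous : ∀ w : List (Fin d), Continuous (sigRev x a w) := by
  intro w
  induction w with
  | nil => rw [sigRev_nil]; exact continuous_const
  | cons i w ih =>
    rw [sigRev_cons]
    exact intervalIntegral.continuous_primitive
      (fun c b => ((ih.mul (hc i)).intervalIntegrable c b)) a

include hc in
theorem sigRev_hasDerivAt (i : Fin d) (w : List (Fin d)) (t : ℝ) :
    HasDerivAt (sigRev x a (i :: w)) (sigRev x a w t * deriv (fun u => x u i) t) t := by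
  have hcint : Continuous fun s => sigRev x a w s * deriv (fun u => x u i) s :=
    (sigRev_continuous x a hc w).mul (hc i)
  rw [sigRev_cons]
  exact intervalIntegral.integral_hasDerivAt_right (hcint.intervalIntegrable a t)
    hcint.aestronglyMeasurable.stronglyMeasurableAtFilter hcint.continuousAt

theorem sigRev_cons_self (i : Fin d) (w : List (Fin d)) : sigRev x a (i :: w) a = 0 := by
  rw [sigRev_cons]; simp

theorem list_sum_continuous {β : Type*} (l : List β) (g : β → ℝ → ℝ)
    (hg : ∀ b, Continuous (g b)) : Continuous fun s => (l.map fun b => g b s).sum := by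
  induction l with
  | nil => simpa using continuous_const
  | cons b' l' ih' => simpa using (show Continuous fun s => g b' s + (l'.map fun b => g b s).sum from (hg b').add ih')

/-- pull a list-indexed sum out of an interval integral -/
theorem list_sum_integral {β : Type*} (l : List β) (g : β → ℝ → ℝ)
    (hg : ∀ b, Continuous (g b)) (c t : ℝ) :
    (l.map fun b => ∫ s in c..t, g b s).sum = ∫ s in c..t, (l.map fun b => g b s).sum := by
  induction l with
  | nil => simp
  | cons b l ih =>
    simp only [List.map_cons, List.sum_cons, ih]
    rw [← intervalIntegral.integral_add ((hg b).intervalIntegrable c t)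
      (((list_sum_continuous l g hg)).intervalIntegrable c t)]

end
section
variable {d : ℕ} (x : ℝ → Fin d → ℝ) (a : ℝ) (hc : ∀ i, Continuous (deriv (fun u => x u i)))

include hc in
/-- The shuffle identity for iterated integrals. -/
theorem sig_shuffle : ∀ (u v : List (Fin d)) (t : ℝ),
    ((shuffle u v).map fun w => sigRev x a w t).sum = sigRev x a u t * sigRev x a v t := by
  intro u
  induction u with
  | nil => intro v t; simp [shuffle_nil_left, sigRev_nil]
  | cons i u' ihu =>
    intro v
    induction v with
    | nil => intro t; simp [shuffle_nil_right, sigRev_nil]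
    | cons j v' ihv =>
      intro t
      set di := deriv (fun u => x u i) with hdi
      set dj := deriv (fun u => x u j) with hdj
      have contw : ∀ w : List (Fin d), Continuous (sigRev x a w) := sigRev_continuous x a hc
      -- rewrite left side
      rw [shuffle_cons_cons]
      simp only [List.map_append, List.map_map, List.sum_append, Function.comp_def]
      have e1 : ∀ w : List (Fin d), ∀ s : ℝ,
          sigRev x a (i :: w) s = ∫ r in a..s, sigRev x a w r * di r := by
        intro w s; rw [sigRev_cons]
      have e2 : ∀ w : List (Fin d), ∀ s : ℝ,
          sigRev x a (j :: w) s = ∫ r in a..s, sigRev x a w r * dj r := by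
        intro w s; rw [sigRev_cons]
      simp only [e1, e2]
      rw [list_sum_integral _ (fun w r => sigRev x a w r * di r)
            (fun w => (contw w).mul (hc i)) a t,
          list_sum_integral _ (fun w r => sigRev x a w r * dj r)
            (fun w => (contw w).mul (hc j)) a t]
      have f1 : ∀ s : ℝ, ((shuffle u' (j :: v')).map fun w => sigRev x a w s * di s).sum
          = sigRev x a u' s * sigRev x a (j :: v') s * di s := by
        intro s
        rw [List.sum_map_mul_right, ihu (j :: v') s]
      have f2 : ∀ s : ℝ, ((shuffle (i :: u') v').map fun w => sigRev x a w s * dj s).sum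
          = sigRev x a (i :: u') s * sigRev x a v' s * dj s := by
        intro s
        rw [List.sum_map_mul_right, ihv s]
      simp only [f1, f2]
      -- now FTC
      have key : (∫ s in a..t, (sigRev x a u' s * di s * sigRev x a (j :: v') s
            + sigRev x a (i :: u') s * (sigRev x a v' s * dj s)))
          = sigRev x a (i :: u') t * sigRev x a (j :: v') t
            - sigRev x a (i :: u') a * sigRev x a (j :: v') a := by
        apply intervalIntegral.integral_eq_sub_of_hasDerivAt
        · intro s _
          exact (sigRev_hasDerivAt x a hc i u' s).mul (sigRev_hasDerivAt x a hc j v' s)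
        · exact ((((contw u').mul (hc i)).mul (contw (j :: v'))).add
            ((contw (i :: u')).mul ((contw v').mul (hc j)))).intervalIntegrable a t
      rw [sigRev_cons_self, sigRev_cons_self, mul_zero, sub_zero] at key
      rw [← e1 u' t, ← e2 v' t]
      rw [← intervalIntegral.integral_add
          (f := fun s => sigRev x a u' s * sigRev x a (j :: v') s * di s)
          (g := fun s => sigRev x a (i :: u') s * sigRev x a v' s * dj s)
          ((((contw u').mul (contw (j :: v'))).mul (hc i)).intervalIntegrable a t)
          ((((contw (i :: u')).mul (contw v')).mul (hc j)).intervalIntegrable a t)]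
      rw [← key]
      apply intervalIntegral.integral_congr
      intro s _
      ring
end


theorem sum_map_flatMap {α β M : Type*} [AddCommMonoid M] (l : List α) (f : α → List β)
    (h : β → M) : ((l.flatMap f).map h).sum = (l.map fun b => ((f b).map h).sum).sum := by
  induction l with
  | nil => simp
  | cons b l ih => simp [ih]

section
variable {d : ℕ} (x : ℝ → Fin d → ℝ) (a : ℝ) (hc : ∀ i, Continuous (deriv (fun u => x u i)))

include hc in
theorem sig_shuffleList (us vs : List (List (Fin d))) (t : ℝ) :
    ((shuffleList us vs).map fun w => sigRev x a w t).sum =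
      (us.map fun w => sigRev x a w t).sum * (vs.map fun w => sigRev x a w t).sum := by
  unfold shuffleList
  rw [sum_map_flatMap]
  have : ∀ u : List (Fin d), ((u :: []).map fun w => sigRev x a w t).sum = sigRev x a u t := by
    simp
  calc (us.map fun u => (((vs.flatMap fun v => shuffle u v)).map fun w => sigRev x a w t).sum).sum
      = (us.map fun u => sigRev x a u t * (vs.map fun w => sigRev x a w t).sum).sum := by
        congr 1
        apply List.map_congr_left
        intro u _
        rw [sum_map_flatMap]
        have : (vs.map fun v => ((shuffle u v).map fun w => sigRev x a w t).sum)
            = vs.map fun v => sigRev x a u t * sigRev x a v t := by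
          apply List.map_congr_left
          intro v _
          rw [sig_shuffle x a hc u v t]
        rw [this, List.sum_map_mul_left]
    _ = _ := by rw [List.sum_map_mul_right]

include hc in
theorem sig_shufflePow_rev (i : Fin d) (m : ℕ) (t : ℝ) :
    ((shufflePow [i] m).map fun w => sigRev x a w.reverse t).sum = (sigRev x a [i] t) ^ m := by
  induction m with
  | zero => simp [shufflePow, sigRev_nil]
  | succ m ih =>
    show (((shuffleList [[i]] (shufflePow [i] m))).map fun w => sigRev x a w.reverse t).sum = _
    unfold shuffleList
    simp only [List.flatMap_cons, List.flatMap_nil, List.append_nil]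
    rw [sum_map_flatMap]
    have : ((shufflePow [i] m).map fun v => ((shuffle [i] v).map fun w => sigRev x a w.reverse t).sum)
        = (shufflePow [i] m).map fun v => sigRev x a [i] t * sigRev x a v.reverse t := by
      apply List.map_congr_left
      intro v _
      rw [sum_shuffle_reverse [i] v (fun w => sigRev x a w t)]
      simp only [List.reverse_singleton]
      rw [sig_shuffle x a hc [i] v.reverse t]
    rw [this, List.sum_map_mul_left, ih, pow_succ]
    ring

include hc in
theorem sum_shuffleList_reverse_sig (us vs : List (List (Fin d))) (t : ℝ) :
    ((shuffleList us vs).map fun w => sigRev x a w.reverse t).sum =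
      (us.map fun w => sigRev x a w.reverse t).sum * (vs.map fun w => sigRev x a w.reverse t).sum := by
  unfold shuffleList
  rw [sum_map_flatMap]
  calc (us.map fun u => (((vs.flatMap fun v => shuffle u v)).map fun w => sigRev x a w.reverse t).sum).sum
      = (us.map fun u => sigRev x a u.reverse t * (vs.map fun w => sigRev x a w.reverse t).sum).sum := by
        congr 1
        apply List.map_congr_left
        intro u _
        rw [sum_map_flatMap]
        have : (vs.map fun v => ((shuffle u v).map fun w => sigRev x a w.reverse t).sum)
            = vs.map fun v => sigRev x a u.reverse t * sigRev x a v.reverse t := by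
          apply List.map_congr_left
          intro v _
          rw [sum_shuffle_reverse u v (fun w => sigRev x a w t),
            sig_shuffle x a hc u.reverse v.reverse t]
        rw [this, List.sum_map_mul_left]
    _ = _ := by rw [List.sum_map_mul_right]

end


section
open Real
variable (x : ℝ → ℝ) (hx : ContDiff ℝ (⊤ : ℕ∞) x) (hx0 : x 0 = 0)

theorem fourierAug_deriv0 : deriv (fun u => fourierAug x u 0) = fun _ => (1:ℝ) := by
  funext s
  show deriv (fun u : ℝ => u) s = 1
  exact deriv_id s

theorem fourierAug_deriv1 : deriv (fun u => fourierAug x u 1) = Real.cos := by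
  show deriv Real.sin = Real.cos
  exact Real.deriv_sin

theorem fourierAug_deriv2 : deriv (fun u => fourierAug x u 2) = fun s => -Real.sin s := by
  funext s
  show deriv (fun u => Real.cos u - 1) s = -Real.sin s
  rw [deriv_sub_const, Real.deriv_cos]

theorem fourierAug_deriv3 : deriv (fun u => fourierAug x u 3) = deriv x := rfl

include hx in
theorem fourierAug_hc : ∀ i, Continuous (deriv (fun u => fourierAug x u i)) := by
  intro i
  fin_cases i
  · rw [show ((⟨0, by norm_num⟩ : Fin 4)) = 0 from rfl, fourierAug_deriv0]; exact continuous_const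
  · rw [show ((⟨1, by norm_num⟩ : Fin 4)) = 1 from rfl, fourierAug_deriv1]; exact Real.continuous_cos
  · rw [show ((⟨2, by norm_num⟩ : Fin 4)) = 2 from rfl, fourierAug_deriv2]; exact Real.continuous_sin.neg
  · rw [show ((⟨3, by norm_num⟩ : Fin 4)) = 3 from rfl, fourierAug_deriv3]
    exact hx.continuous_deriv (by simp)

theorem sigRev_word1 (t : ℝ) : sigRev (fourierAug x) 0 [1] t = Real.sin t := by
  rw [sigRev_cons, sigRev_nil]
  simp only [one_mul, fourierAug_deriv1]
  rw [integral_cos]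
  simp

theorem sigRev_word2 (t : ℝ) : sigRev (fourierAug x) 0 [2] t = Real.cos t - 1 := by
  rw [sigRev_cons, sigRev_nil]
  simp only [one_mul, fourierAug_deriv2]
  rw [show (fun s => -Real.sin s) = fun s => -(Real.sin s) from rfl, intervalIntegral.integral_neg (f := Real.sin), integral_sin]
  simp

include hx hx0 in
theorem sigRev_word3 (t : ℝ) : sigRev (fourierAug x) 0 [3] t = x t := by
  rw [sigRev_cons, sigRev_nil]
  simp only [one_mul, fourierAug_deriv3]
  rw [intervalIntegral.integral_deriv_eq_sub (fun s _ => (hx.differentiable (by simp)).differentiableAt)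
    ((hx.continuous_deriv (by simp)).intervalIntegrable 0 t)]
  rw [hx0, sub_zero]

include hx hx0 in
theorem Lsum (m q : ℕ) (s : ℝ) :
    ((shuffleList (shuffleList [[(3 : Fin 4)]] (shufflePow [(1 : Fin 4)] m))
        (shufflePow [(2 : Fin 4)] q)).map
      fun w => sigRev (fourierAug x) 0 w.reverse s).sum
    = x s * Real.sin s ^ m * (Real.cos s - 1) ^ q := by
  have hc := fourierAug_hc x hx
  rw [sum_shuffleList_reverse_sig _ _ hc, sum_shuffleList_reverse_sig _ _ hc,
    sig_shufflePow_rev _ _ hc, sig_shufflePow_rev _ _ hc]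
  simp only [List.map_cons, List.map_nil, List.sum_cons, List.sum_nil, add_zero,
    List.reverse_singleton]
  rw [sigRev_word1, sigRev_word2, sigRev_word3 x hx hx0]

end

theorem cos_nat_mul_expand (n : ℕ) (t : ℝ) :
    Real.cos (n * t) = ∑ k ∈ Finset.range (n + 1),
      (n.choose k : ℝ) * Real.cos t ^ k * Real.sin t ^ (n - k) *
        Real.cos ((n - k : ℕ) * Real.pi / 2) := by
  have hI : ∀ m : ℕ, ((Complex.I : ℂ) ^ m).re = Real.cos (m * Real.pi / 2) := by
    intro m
    have hIeq : (Complex.I : ℂ) = Complex.exp (↑(Real.pi / 2) * Complex.I) := by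
      rw [Complex.exp_mul_I, ← Complex.ofReal_cos, ← Complex.ofReal_sin]
      simp [Real.cos_pi_div_two, Real.sin_pi_div_two]
    rw [hIeq, ← Complex.exp_nat_mul]
    have : (m : ℂ) * (↑(Real.pi / 2) * Complex.I) = ↑((m : ℝ) * Real.pi / 2) * Complex.I := by
      push_cast; ring
    rw [this, Complex.exp_ofReal_mul_I_re]
  have h1 : Real.cos (n * t) = ((Complex.exp (↑t * Complex.I)) ^ n).re := by
    rw [← Complex.exp_nat_mul]
    have : (n : ℂ) * (↑t * Complex.I) = ↑((n : ℝ) * t) * Complex.I := by push_cast; ring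
    rw [this, Complex.exp_ofReal_mul_I_re]
  rw [h1, Complex.exp_mul_I, ← Complex.ofReal_cos, ← Complex.ofReal_sin, add_pow,
    Complex.re_sum]
  apply Finset.sum_congr rfl
  intro k hk
  rw [mul_pow, ← Complex.ofReal_pow, ← Complex.ofReal_pow]
  have : (↑(Real.cos t ^ k) : ℂ) * (↑(Real.sin t ^ (n - k)) * Complex.I ^ (n - k)) * (n.choose k : ℕ)
      = ↑(Real.cos t ^ k * Real.sin t ^ (n - k) * (n.choose k : ℝ)) * Complex.I ^ (n - k) := by
    push_cast; ring
  rw [this, Complex.re_ofReal_mul, hI]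
  ring


section
variable (x : ℝ → ℝ) (hx : ContDiff ℝ (⊤ : ℕ∞) x) (hx0 : x 0 = 0)

include hx hx0 in
theorem term_eval (m q : ℕ) :
    ((shuffleList (shuffleList [[(3 : Fin 4)]] (shufflePow [(1 : Fin 4)] m))
        (shufflePow [(2 : Fin 4)] q)).map
      fun w => sigCoeff (fourierAug x) 0 (2 * Real.pi) (w ++ [(0 : Fin 4)])).sum
    = ∫ s in (0:ℝ)..(2 * Real.pi), x s * Real.sin s ^ m * (Real.cos s - 1) ^ q := by
  have hc := fourierAug_hc x hx
  have hsig : ∀ w : List (Fin 4), sigCoeff (fourierAug x) 0 (2 * Real.pi) (w ++ [(0 : Fin 4)])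
      = ∫ s in (0:ℝ)..(2 * Real.pi), sigRev (fourierAug x) 0 w.reverse s := by
    intro w
    unfold sigCoeff
    rw [List.reverse_append, List.reverse_singleton, List.singleton_append, sigRev_cons]
    simp only [fourierAug_deriv0, mul_one]
  simp only [hsig]
  rw [list_sum_integral (shuffleList (shuffleList [[(3 : Fin 4)]] (shufflePow [(1 : Fin 4)] m))
        (shufflePow [(2 : Fin 4)] q)) (fun w s => sigRev (fourierAug x) 0 w.reverse s)
    (fun w => sigRev_continuous (fourierAug x) 0 hc w.reverse) 0 (2 * Real.pi)]
  apply intervalIntegral.integral_congr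
  intro s _
  exact Lsum x hx hx0 m q s

include hx in
theorem pointwise_expand (n : ℕ) (t : ℝ) :
    x t * Real.cos (n * t) = ∑ k ∈ Finset.range (n + 1), ∑ q ∈ Finset.range (k + 1),
      (n.choose k : ℝ) * (k.choose q : ℝ) * Real.cos ((n - k : ℕ) * Real.pi / 2) *
        (x t * Real.sin t ^ (n - k) * (Real.cos t - 1) ^ q) := by
  rw [cos_nat_mul_expand, Finset.mul_sum]
  apply Finset.sum_congr rfl
  intro k _
  have hck : Real.cos t ^ k = ∑ q ∈ Finset.range (k + 1),
      (Real.cos t - 1) ^ q * (k.choose q : ℝ) := by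
    have := add_pow (Real.cos t - 1) 1 k
    simp only [sub_add_cancel, one_pow, mul_one] at this
    rw [this]
  rw [hck]
  simp only [Finset.mul_sum, Finset.sum_mul]
  apply Finset.sum_congr rfl
  intro q _
  ring

set_option maxHeartbeats 1000000 in
include hx hx0 in
theorem fourier_main (n : ℕ) :
    (1 / Real.pi) * (∫ t in (0:ℝ)..(2 * Real.pi), x t * Real.cos (n * t)) =
      (1 / Real.pi) * ∑ k ∈ Finset.range (n + 1), ∑ q ∈ Finset.range (k + 1),
        (n.choose k : ℝ) * (k.choose q : ℝ) * Real.cos ((n - k : ℕ) * Real.pi / 2) *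
          ((shuffleList (shuffleList [[(3 : Fin 4)]] (shufflePow [(1 : Fin 4)] (n - k)))
              (shufflePow [(2 : Fin 4)] q)).map
            fun w => sigCoeff (fourierAug x) 0 (2 * Real.pi) (w ++ [(0 : Fin 4)])).sum := by
  congr 1
  have hxc : Continuous x := hx.continuous
  have hcont : ∀ (m q : ℕ), Continuous fun t => x t * Real.sin t ^ m * (Real.cos t - 1) ^ q := by
    intro m q
    exact (hxc.mul (Real.continuous_sin.pow m)).mul ((Real.continuous_cos.sub continuous_const).pow q)
  have hint : ∀ (m q : ℕ) (c : ℝ), IntervalIntegrable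
      (fun t => c * (x t * Real.sin t ^ m * (Real.cos t - 1) ^ q)) MeasureTheory.volume 0 (2 * Real.pi) :=
    fun m q c => (continuous_const.mul (hcont m q)).intervalIntegrable 0 (2 * Real.pi)
  simp only [term_eval x hx hx0]
  rw [intervalIntegral.integral_congr (g := fun t => ∑ k ∈ Finset.range (n + 1), ∑ q ∈ Finset.range (k + 1),
        (n.choose k : ℝ) * (k.choose q : ℝ) * Real.cos ((n - k : ℕ) * Real.pi / 2) *
          (x t * Real.sin t ^ (n - k) * (Real.cos t - 1) ^ q))
      (fun t _ => pointwise_expand x hx n t),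
    intervalIntegral.integral_finset_sum (f := fun k t => ∑ q ∈ Finset.range (k + 1),
          (n.choose k : ℝ) * (k.choose q : ℝ) * Real.cos ((n - k : ℕ) * Real.pi / 2) *
            (x t * Real.sin t ^ (n - k) * (Real.cos t - 1) ^ q)) (fun k _ =>
      ((continuous_finset_sum _ (fun q _ => continuous_const.mul (hcont (n - k) q))).intervalIntegrable
        0 (2 * Real.pi)))]
  apply Finset.sum_congr rfl
  intro k _
  rw [intervalIntegral.integral_finset_sum (fun q (_ : q ∈ Finset.range (k + 1)) => hint (n - k) q
    ((n.choose k : ℝ) * (k.choose q : ℝ) * Real.cos ((n - k : ℕ) * Real.pi / 2)))]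
  apply Finset.sum_congr rfl
  intro q _
  rw [intervalIntegral.integral_const_mul]


/-- **Fourier coefficient from the signature:**
`a_n = (1/π)∫_0^{2π} x(t) cos(nt) dt` equals
`(1/π) Σ_{k=0}^n Σ_{q=0}^k C(n,k)C(k,q) cos((n−k)π/2) ⟨(e₄ ⧢ e₂^{⧢(n−k)} ⧢ e₃^{⧢q}) ≻ e₁, S(x̂)⟩`. -/
theorem fourier_an_from_sig (x : ℝ → ℝ) (hx : ContDiff ℝ (⊤ : ℕ∞) x) (hx0 : x 0 = 0) (n : ℕ) :
    (1 / Real.pi) * (∫ t in (0:ℝ)..(2 * Real.pi), x t * Real.cos (n * t)) =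
      (1 / Real.pi) * ∑ k ∈ Finset.range (n + 1), ∑ q ∈ Finset.range (k + 1),
        (n.choose k : ℝ) * (k.choose q : ℝ) * Real.cos ((n - k : ℕ) * Real.pi / 2) *
          ((shuffleList (shuffleList [[(3 : Fin 4)]] (shufflePow [(1 : Fin 4)] (n - k)))
              (shufflePow [(2 : Fin 4)] q)).map
            fun w => sigCoeff (fourierAug x) 0 (2 * Real.pi) (w ++ [(0 : Fin 4)])).sum :=
  fourier_main x hx hx0 n
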